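/- Let F(w₁,…,wₙ) = (1/2)∑_{i,j=1}^n f(w_i,w_j) − ∑_{i∈[n],j∈[k]} f(w_i,v_j) + (1/2)∑_{i,j=1}^k f(v_i,v_j), where f(w,v) = (1/(2π))‖w‖‖v‖(sin θ_{w,v} + (π−θ_{w,v})cos θ_{w,v}) and f is nonnegative. Then for fixed nonzero (w₁,…,wₙ), the function t ↦ F(tw₁,…,twₙ) for t ≥ 0 is a quadratic polynomial in t with strictly positive leading coefficient; consequently F has no local maximum at any point other than possibly the origin. -/

import Mathlib

open Real InnerProductGeometry Finset

/-- `f(w,v) = (1/(2π)) ‖w‖ ‖v‖ (sin θ_{w,v} + (π − θ_{w,v}) cos θ_{w,v})`. -/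
noncomputable def fpair {d : ℕ} (w v : EuclideanSpace ℝ (Fin d)) : ℝ :=
  (1 / (2 * π)) * ‖w‖ * ‖v‖ *
    (sin (angle w v) + (π - angle w v) * cos (angle w v))

/-- The closed-form population objective
`F(w₁,…,wₙ) = (1/2)∑ᵢⱼ f(wᵢ,wⱼ) − ∑ᵢⱼ f(wᵢ,vⱼ) + (1/2)∑ᵢⱼ f(vᵢ,vⱼ)`. -/
noncomputable def Fobj {d n k : ℕ} (v : Fin k → EuclideanSpace ℝ (Fin d))
    (w : Fin n → EuclideanSpace ℝ (Fin d)) : ℝ :=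
  (1 / 2) * ∑ i : Fin n, ∑ j : Fin n, fpair (w i) (w j)
    - ∑ i : Fin n, ∑ j : Fin k, fpair (w i) (v j)
    + (1 / 2) * ∑ i : Fin k, ∑ j : Fin k, fpair (v i) (v j)

/-!
Since angles are invariant under positive scaling, `f (t w) (t w') = t² f w w'` and
`f (t w) v = t f w v` for `t ≥ 0`, so `t ↦ F (t w)` is a quadratic whose leading coefficient is
`½ ∑ᵢⱼ f wᵢ wⱼ`. This is positive because `f ≥ 0` (equivalently `x cos x ≤ sin x` on `[0, π]`)
and `f wᵢ wᵢ = ‖wᵢ‖² / 2`. A quadratic with positive leading coefficient has no local maximum,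
so `F` has none along the ray through `w`, hence none at `w`.
-/

open Filter Topology

lemma Real.mul_cos_le_sin {x : ℝ} (h0 : 0 ≤ x) (hπ : x ≤ π) : x * cos x ≤ sin x := by
  rcases lt_or_ge x (π / 2) with hx | hx
  · have hcos : 0 < cos x := cos_pos_of_mem_Ioo ⟨by linarith [pi_pos], hx⟩
    have := le_tan h0 hx
    rwa [tan_eq_sin_div_cos, le_div_iff₀ hcos] at this
  · have hcos : cos x ≤ 0 := cos_nonpos_of_pi_div_two_le_of_le hx (by linarith)
    nlinarith [sin_nonneg_of_nonneg_of_le_pi h0 hπ]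

lemma Real.sin_add_pi_sub_mul_cos_nonneg {θ : ℝ} (h0 : 0 ≤ θ) (hπ : θ ≤ π) :
    0 ≤ sin θ + (π - θ) * cos θ := by
  have := mul_cos_le_sin (x := π - θ) (by linarith) (by linarith)
  rw [sin_pi_sub, cos_pi_sub] at this
  linarith

section fpair

variable {d : ℕ}

lemma fpair_nonneg (w v : EuclideanSpace ℝ (Fin d)) : 0 ≤ fpair w v := by
  have := sin_add_pi_sub_mul_cos_nonneg (angle_nonneg w v) (angle_le_pi w v)
  have := pi_pos
  unfold fpair
  positivity

lemma fpair_self {w : EuclideanSpace ℝ (Fin d)} (hw : w ≠ 0) : fpair w w = ‖w‖ ^ 2 / 2 := by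
  have := pi_ne_zero
  simp only [fpair, angle_self hw, sin_zero, cos_zero]
  field_simp
  ring

lemma fpair_smul_left {t : ℝ} (ht : 0 ≤ t) (w v : EuclideanSpace ℝ (Fin d)) :
    fpair (t • w) v = t * fpair w v := by
  rcases ht.eq_or_lt with rfl | ht
  · simp [fpair]
  · simp only [fpair, angle_smul_left_of_pos _ _ ht, norm_smul, norm_of_nonneg ht.le]
    ring

lemma fpair_smul_smul {t : ℝ} (ht : 0 ≤ t) (w v : EuclideanSpace ℝ (Fin d)) :
    fpair (t • w) (t • v) = t ^ 2 * fpair w v := by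
  rcases ht.eq_or_lt with rfl | ht
  · simp [fpair]
  · simp only [fpair, angle_smul_left_of_pos _ _ ht, angle_smul_right_of_pos _ _ ht, norm_smul,
      norm_of_nonneg ht.le]
    ring

lemma sum_sum_fpair_pos {ι : Type*} [Fintype ι] {w : ι → EuclideanSpace ℝ (Fin d)}
    (hw : ∃ i, w i ≠ 0) : 0 < ∑ i, ∑ j, fpair (w i) (w j) := by
  obtain ⟨i, hi⟩ := hw
  have hii : 0 < fpair (w i) (w i) := by
    rw [fpair_self hi]
    have := norm_pos_iff.2 hi
    positivity
  refine sum_pos' (fun _ _ => sum_nonneg fun _ _ => fpair_nonneg _ _) ⟨i, mem_univ i, ?_⟩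
  exact sum_pos' (fun _ _ => fpair_nonneg _ _) ⟨i, mem_univ i, hii⟩

lemma Fobj_smul {n k : ℕ} (v : Fin k → EuclideanSpace ℝ (Fin d))
    (w : Fin n → EuclideanSpace ℝ (Fin d)) {t : ℝ} (ht : 0 ≤ t) :
    Fobj v (t • w) = 1 / 2 * (∑ i, ∑ j, fpair (w i) (w j)) * t ^ 2
      + (-∑ i, ∑ j, fpair (w i) (v j)) * t + 1 / 2 * ∑ i, ∑ j, fpair (v i) (v j) := by
  simp only [Fobj, Pi.smul_apply, fpair_smul_smul ht, fpair_smul_left ht, ← mul_sum]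
  ring

end fpair

lemma not_isLocalMax_of_eventually_eq_quadratic {g : ℝ → ℝ} {x a b c : ℝ} (ha : 0 < a)
    (hg : ∀ᶠ t in 𝓝 x, g t = a * t ^ 2 + b * t + c) : ¬ IsLocalMax g x := by
  intro hmax
  have hq : ∀ᶠ t in 𝓝 x, a * t ^ 2 + b * t + c ≤ a * x ^ 2 + b * x + c := by
    filter_upwards [hmax, hg] with t ht hgt
    rwa [← hgt, ← hg.self_of_nhds]
  have hshift : ∀ s : ℝ, Tendsto (fun δ => x + s * δ) (𝓝[>] 0) (𝓝 x) := fun s => by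
    have : Continuous fun δ : ℝ => x + s * δ := by fun_prop
    simpa using (this.tendsto 0).mono_left nhdsWithin_le_nhds
  obtain ⟨δ, ⟨hδ, hplus⟩, hminus⟩ :=
    ((eventually_mem_nhdsWithin.and ((hshift 1).eventually hq)).and
      ((hshift (-1)).eventually hq)).exists
  -- The quadratic has midpoint defect `q (x + δ) + q (x - δ) - 2 q x = 2 a δ²`.
  nlinarith [mul_pos ha (mul_pos (Set.mem_Ioi.1 hδ) (Set.mem_Ioi.1 hδ))]

/-- For fixed `(w₁,…,wₙ)` not all zero, `t ↦ F(t w₁, …, t wₙ)` (`t ≥ 0`) is a quadratic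
polynomial in `t` with strictly positive leading coefficient; consequently `F` has no
local maximum at any point other than possibly the origin. -/
theorem stmt16 (d n k : ℕ) (v : Fin k → EuclideanSpace ℝ (Fin d))
    (w : Fin n → EuclideanSpace ℝ (Fin d)) (hw : ∃ i, w i ≠ 0) :
    (∃ a b c : ℝ, 0 < a ∧
      ∀ t : ℝ, 0 ≤ t → Fobj v (fun i => t • w i) = a * t ^ 2 + b * t + c) ∧
    ¬ IsLocalMax (Fobj v) w := by
  have ha : 0 < 1 / 2 * ∑ i, ∑ j, fpair (w i) (w j) := by
    have := sum_sum_fpair_pos hw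
    positivity
  refine ⟨⟨_, _, _, ha, fun t ht => Fobj_smul v w ht⟩, fun hmax => ?_⟩
  have hray : IsLocalMax (Fobj v ∘ fun t : ℝ => t • w) 1 :=
    IsLocalMax.comp_continuous (by rwa [one_smul]) (by fun_prop)
  exact not_isLocalMax_of_eventually_eq_quadratic ha
    ((lt_mem_nhds zero_lt_one).mono fun t ht => Fobj_smul v w (le_of_lt ht)) hray
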